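/- Let G be a graph, k ≥ 0, K a clique in G, r a vertex of G − K, and a, b, c three distinct pairwise non-adjacent vertices each adjacent to r, each with all remaining neighbors inside K, where N(a) ∩ K, N(b) ∩ K, N(c) ∩ K are prefixes {v₁,…,v_{q_a}}, {v₁,…,v_{q_b}}, {v₁,…,v_{q_c}} of a fixed ordering (v₁,…,v_q) of K with 1 ≤ q_a ≤ q_b ≤ q_c. Then G has a feedback vertex set of size at most k if and only if G − a has a feedback vertex set of size at most k. -/

import Mathlib

/-!
An FVS of `G` restricts to one of `G - a`, so only the converse needs an argument. Let `X` be an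
FVS of `G - a`, so that `F = G - (X ∪ {a})` is a forest. A vertex `m` can be added to a forest
unless two of its neighbours are joined in it (in particular, it can if it has at most one
neighbour there), and a forest contains at most two vertices of the clique `K`.

If `a` has at most one neighbour outside `X`, then `X` itself works. Otherwise `a` has a
neighbour `w ∈ K` outside `X`, and we trade vertices of `X` without increasing its size:
* `b, c ∈ X`: replace `b, c` by the at most two vertices of `K` outside `X`; then `a, b, c` are
  pendant at `r`.
* `b ∈ X`, `c ∉ X`: `w` is the only vertex of `N(c) ∩ K` in `F`, so after replacing `b` by `r`
  both `a` and `b` are pendant at `w`.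
* `b ∉ X`, `c ∈ X`: `w` is the only vertex of `N(b) ∩ K ⊇ N(a) ∩ K` in `F`. Replace `c` by `r`
  if `w` is also the only vertex of `N(c) ∩ K` in `F`; otherwise replace it by `w`, so that `a`
  is pendant at `r` and `c` has the two neighbours `r` and `w' ∈ K`, which are not joined
  avoiding `w`: `b r … w' w b` would be a cycle in `F`.
* `b, c ∉ X`: `a` has no second neighbour in `F`, as `b r c w b` or `c w w' c` would be a cycle.
-/

open SimpleGraph

/-- `X` is a feedback vertex set of `G`: deleting `X` leaves an acyclic graph. -/
def IsFVS {V : Type*} [Fintype V] (G : SimpleGraph V) (X : Finset V) : Prop :=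
  (G.induce ((↑X : Set V)ᶜ)).IsAcyclic

/-- `G` has a feedback vertex set of size at most `k`. -/
def HasFVS {V : Type*} [Fintype V] (G : SimpleGraph V) (k : ℕ) : Prop :=
  ∃ X : Finset V, X.card ≤ k ∧ IsFVS G X

/-- The graph `G - u`, obtained by deleting the vertex `u`. -/
def delVert {V : Type*} (G : SimpleGraph V) (u : V) : SimpleGraph {x : V // x ≠ u} :=
  G.comap Subtype.val

namespace SimpleGraph

variable {V : Type*} {G : SimpleGraph V}

theorem Walk.IsCycle.exists_walk_of_mem_support {u m : V} {c : G.Walk u u} (hc : c.IsCycle)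
    (hm : m ∈ c.support) :
    ∃ x y, G.Adj m x ∧ G.Adj m y ∧ x ≠ y ∧
      ∃ p : G.Walk x y, m ∉ p.support ∧ p.support ⊆ c.support := by
  classical
  have hd := hc.rotate hm
  have hsupp : (c.rotate m hm).support ⊆ c.support := fun z hz =>
    (Walk.mem_support_rotate_iff c m hm).1 hz
  generalize c.rotate m hm = d at hd hsupp
  cases d with
  | nil => exact absurd Walk.Nil.nil hd.not_nil
  | cons hx p =>
    rename_i x
    obtain ⟨hp, hmx⟩ := (Walk.cons_isCycle_iff p hx).1 hd
    have hpr := hp.reverse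
    cases hq : p.reverse with
    | nil => exact absurd rfl hx.ne
    | cons hy q =>
      rename_i y
      rw [hq, Walk.cons_isPath_iff] at hpr
      refine ⟨x, y, hx, hy, fun hxy => hmx ?_, q.reverse, by simpa using hpr.2, fun z hz => ?_⟩
      · subst hxy
        have : s(m, x) ∈ p.reverse.edges := by simp [hq]
        simpa using this
      · have : z ∈ p.reverse.support := by
          rw [hq, Walk.support_cons]
          exact List.mem_cons_of_mem _ (by simpa using hz)
        exact hsupp (List.mem_cons_of_mem _ (by simpa using this))

theorem Walk.exists_isCycle_of_adj_of_adj {m x y : V} (hx : G.Adj m x) (hy : G.Adj m y)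
    (hxy : x ≠ y) (p : G.Walk x y) (hm : m ∉ p.support) :
    ∃ (u : V) (c : G.Walk u u), c.IsCycle ∧ ∀ z ∈ c.support, z = m ∨ z ∈ p.support := by
  classical
  have hq : m ∉ p.bypass.support := fun h => hm (p.support_bypass_subset_support h)
  let P : G.Path m y := ⟨.cons hx p.bypass, (Walk.cons_isPath_iff _ _).2 ⟨p.bypass_isPath, hq⟩⟩
  refine ⟨y, .cons hy.symm P, Path.cons_isCycle P hy.symm ?_, ?_⟩
  · simp only [P, Walk.edges_cons, List.mem_cons, Sym2.eq_iff, not_or]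
    exact ⟨⟨fun h => hy.ne h.1.symm, fun h => hxy h.1.symm⟩,
      fun h => hq (p.bypass.snd_mem_support_of_mem_edges h)⟩
  · intro z hz
    simp only [P, Walk.support_cons, List.mem_cons] at hz
    rcases hz with rfl | rfl | hz
    · exact .inr p.end_mem_support
    · exact .inl rfl
    · exact .inr (p.support_bypass_subset_support hz)

theorem Walk.IsCycle.induce {s : Set V} {u : V} {c : G.Walk u u} (hc : c.IsCycle)
    (hcs : ∀ z ∈ c.support, z ∈ s) : (c.induce s hcs).IsCycle :=
  (Walk.isCycle_map_iff_of_injective (f := (Embedding.induce s).toHom) Subtype.val_injective).1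
    (by rwa [Walk.map_induce])

theorem isAcyclic_induce_iff {s : Set V} :
    (G.induce s).IsAcyclic ↔ ∀ (u : V) (c : G.Walk u u), c.IsCycle → ∃ z ∈ c.support, z ∉ s := by
  constructor
  · intro h u c hc
    by_contra! hcs
    exact h _ (hc.induce hcs)
  · intro h u c hc
    obtain ⟨z, hz, hzs⟩ := h _ _ (hc.map (f := (Embedding.induce s).toHom) Subtype.val_injective)
    rw [Walk.support_map, List.mem_map] at hz
    obtain ⟨w, -, rfl⟩ := hz
    exact hzs w.2

theorem neighborSet_subset_insert_insert_erase [DecidableEq V] {X : Finset V} {K : Set V}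
    {u v r w : V} (hu : G.neighborSet u ⊆ insert r K) (hv : v ∉ K)
    (hw : ∀ x ∈ K, G.Adj u x → x ∉ X → x = w) :
    G.neighborSet u ⊆ insert r (insert w ↑(X.erase v)) := by
  intro x hx
  rcases hu hx with rfl | hxK
  · exact .inl rfl
  by_cases hxX : x ∈ X
  · exact .inr (.inr (Finset.mem_erase.2 ⟨ne_of_mem_of_not_mem hxK hv, hxX⟩))
  · exact .inr (.inl (hw x hxK hx hxX))

end SimpleGraph

theorem Finset.card_insert_erase_le {α : Type*} [DecidableEq α] {s : Finset α} {a b : α}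
    (hb : b ∈ s) : (insert a (s.erase b)).card ≤ s.card := by
  have := Finset.card_pos.2 ⟨b, hb⟩
  have := Finset.card_insert_le a (s.erase b)
  rw [Finset.card_erase_of_mem hb] at this
  omega

section FVS

variable {V : Type*} [Fintype V] {G : SimpleGraph V}

theorem isFVS_iff {X : Finset V} :
    IsFVS G X ↔ ∀ (u : V) (c : G.Walk u u), c.IsCycle → ∃ z ∈ c.support, z ∈ X := by
  simp [IsFVS, isAcyclic_induce_iff]

theorem IsFVS.mono {X Y : Finset V} (hX : IsFVS G X) (hXY : X ⊆ Y) : IsFVS G Y :=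
  isFVS_iff.2 fun u c hc =>
    let ⟨z, hz, hzX⟩ := isFVS_iff.1 hX u c hc
    ⟨z, hz, hXY hzX⟩

theorem isFVS_delVert_iff [DecidableEq V] {a : V} {X : Finset {x // x ≠ a}} :
    IsFVS (delVert G a) X ↔ IsFVS G (insert a (X.map (Function.Embedding.subtype _))) := by
  have hG : delVert G a = G.induce {x | x ≠ a} := rfl
  rw [isFVS_iff, isFVS_iff, hG]
  constructor
  · intro h u c hc
    by_cases ha : a ∈ c.support
    · exact ⟨a, ha, Finset.mem_insert_self _ _⟩
    obtain ⟨z, hz, hzX⟩ := h _ _ (hc.induce (s := {x | x ≠ a}) fun z hz hza => ha (hza ▸ hz))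
    rw [Walk.support_induce, List.mem_attachWith] at hz
    exact ⟨z, hz, Finset.mem_insert_of_mem (Finset.mem_map_of_mem _ hzX)⟩
  · intro h u c hc
    obtain ⟨z, hz, hzX⟩ := h _ _ (hc.map (f := (Embedding.induce _).toHom) Subtype.val_injective)
    rw [Walk.support_map, List.mem_map] at hz
    obtain ⟨w, hw, rfl⟩ := hz
    rw [Finset.mem_insert, Finset.mem_map] at hzX
    rcases hzX with hwa | ⟨w', hw'X, hw'⟩
    · exact absurd hwa w.2
    · exact ⟨w, hw, Subtype.val_injective hw' ▸ hw'X⟩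

theorem isFVS_iff_insert [DecidableEq V] {Y : Finset V} {m : V} (hm : m ∉ Y) :
    IsFVS G Y ↔ IsFVS G (insert m Y) ∧ ∀ x y, G.Adj m x → G.Adj m y → x ≠ y →
      ∀ p : G.Walk x y, ∃ z ∈ p.support, z ∈ insert m Y := by
  constructor
  · refine fun hY => ⟨hY.mono (Finset.subset_insert _ _), fun x y hx hy hxy p => ?_⟩
    by_contra! hp
    obtain ⟨u, c, hc, hcp⟩ := Walk.exists_isCycle_of_adj_of_adj hx hy hxy p
      fun hmp => hp m hmp (Finset.mem_insert_self _ _)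
    obtain ⟨z, hz, hzY⟩ := isFVS_iff.1 hY u c hc
    rcases hcp z hz with rfl | hzp
    · exact hm hzY
    · exact hp z hzp (Finset.mem_insert_of_mem hzY)
  · rintro ⟨hmY, hwalk⟩
    refine isFVS_iff.2 fun u c hc => ?_
    obtain ⟨z, hz, hzmY⟩ := isFVS_iff.1 hmY u c hc
    rcases Finset.mem_insert.1 hzmY with rfl | hzY
    · obtain ⟨x, y, hx, hy, hxy, p, hzp, hpc⟩ := hc.exists_walk_of_mem_support hz
      obtain ⟨w, hw, hwmY⟩ := hwalk x y hx hy hxy p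
      rcases Finset.mem_insert.1 hwmY with rfl | hwY
      · exact absurd hw hzp
      · exact ⟨w, hpc hw, hwY⟩
    · exact ⟨z, hz, hzY⟩

theorem IsFVS.of_insert [DecidableEq V] {Y : Finset V} {m w : V} (h : IsFVS G (insert m Y))
    (hm : m ∉ Y) (hN : G.neighborSet m ⊆ insert w ↑Y) : IsFVS G Y := by
  refine (isFVS_iff_insert hm).2 ⟨h, fun x y hx hy hxy p => ?_⟩
  rcases hN hx with rfl | hxY
  · rcases hN hy with rfl | hyY
    · exact absurd rfl hxy
    · exact ⟨_, p.end_mem_support, Finset.mem_insert_of_mem hyY⟩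
  · exact ⟨_, p.start_mem_support, Finset.mem_insert_of_mem hxY⟩

theorem IsFVS.mem_of_adj_of_adj_of_adj {Y : Finset V} (hY : IsFVS G Y) {x y z : V}
    (hxy : G.Adj x y) (hyz : G.Adj y z) (hxz : G.Adj x z) : x ∈ Y ∨ y ∈ Y ∨ z ∈ Y := by
  classical
  by_contra! hxyz
  obtain ⟨hxY, hyY, hzY⟩ := hxyz
  obtain ⟨w, hw, hwY⟩ :=
    ((isFVS_iff_insert hzY).1 hY).2 x y hxz.symm hyz.symm hxy.ne (.cons hxy .nil)
  simp only [Walk.support_cons, Walk.support_nil, List.mem_cons, List.not_mem_nil, or_false]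
    at hw
  rcases Finset.mem_insert.1 hwY with rfl | hwY
  · rcases hw with rfl | rfl
    exacts [hxz.ne rfl, hyz.ne rfl]
  · rcases hw with rfl | rfl
    exacts [hxY hwY, hyY hwY]

theorem IsFVS.eq_of_adj_of_isClique {Y : Finset V} {K : Set V} (hY : IsFVS G Y)
    (hK : G.IsClique K) {m x y : V} (hmx : G.Adj m x) (hmy : G.Adj m y) (hxK : x ∈ K)
    (hyK : y ∈ K) (hm : m ∉ Y) (hx : x ∉ Y) (hy : y ∉ Y) : x = y := by
  by_contra hxy
  rcases hY.mem_of_adj_of_adj_of_adj hmx (hK hxK hyK hxy) hmy with h | h | h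
  exacts [hm h, hx h, hy h]

theorem IsFVS.card_le_two_of_isClique {Y T : Finset V} (hY : IsFVS G Y)
    (hT : G.IsClique (T : Set V)) (hTY : Disjoint T Y) : T.card ≤ 2 := by
  by_contra! h
  obtain ⟨x, hx, y, hy, z, hz, hxy, hxz, hyz⟩ := Finset.two_lt_card.1 h
  exact hxy (hY.eq_of_adj_of_isClique hT (hT hz hx hxz.symm) (hT hz hy hyz.symm) hx hy
    (Finset.disjoint_left.1 hTY hz) (Finset.disjoint_left.1 hTY hx)
    (Finset.disjoint_left.1 hTY hy))

theorem IsFVS.insert_erase_of_insert [DecidableEq V] {X : Finset V} {a u r w : V}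
    (hF : IsFVS G (insert a X)) (haX : a ∉ X) (huX : u ∈ X) (har : a ≠ r) (hur : u ≠ r)
    (ha : G.neighborSet a ⊆ insert r (insert w ↑(X.erase u)))
    (hu : G.neighborSet u ⊆ insert r (insert w ↑(X.erase u))) :
    IsFVS G (insert r (X.erase u)) := by
  have hau : a ≠ u := fun h => haX (h ▸ huX)
  have hsub : (insert r (insert w ↑(X.erase u)) : Set V) ⊆
      insert w ↑(insert a (insert r (X.erase u))) := by
    intro x; simp only [Set.mem_insert_iff, Finset.coe_insert, Finset.mem_coe]; tauto
  have hZ : IsFVS G (insert u (insert a (insert r (X.erase u)))) := hF.mono fun x => by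
    simp only [Finset.mem_insert, Finset.mem_erase]; tauto
  refine (hZ.of_insert ?_ (hu.trans hsub)).of_insert (w := w) ?_ (ha.trans ?_)
  · simp [hau.symm, hur]
  · simp [har, haX]
  · intro x; simp only [Set.mem_insert_iff, Finset.coe_insert, Finset.mem_coe]; tauto

theorem HasFVS.delVert [DecidableEq V] {k : ℕ} {a : V} (h : HasFVS G k) :
    HasFVS (delVert G a) k := by
  obtain ⟨X, hXk, hX⟩ := h
  refine ⟨X.subtype (· ≠ a), (Finset.card_subtype _ _).trans_le
    ((Finset.card_filter_le _ _).trans hXk), isFVS_delVert_iff.2 (hX.mono fun x hx => ?_)⟩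
  rw [Finset.subtype_map, Finset.mem_insert, Finset.mem_filter]
  tauto

end FVS

/-- Leaves `a`, `b`, `c` of `G - K` attached at `r`, with nested neighbourhoods in the clique `K`
(the configuration of rule R6). -/
structure NestedLeaves {V : Type*} (G : SimpleGraph V) (K : Set V) (r a b c : V) : Prop where
  isClique : G.IsClique K
  r_notMem : r ∉ K
  a_notMem : a ∉ K
  b_notMem : b ∉ K
  c_notMem : c ∉ K
  a_ne_b : a ≠ b
  a_ne_c : a ≠ c
  b_ne_c : b ≠ c
  adj_ra : G.Adj r a
  adj_rb : G.Adj r b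
  adj_rc : G.Adj r c
  neighborSet_a : G.neighborSet a ⊆ insert r K
  neighborSet_b : G.neighborSet b ⊆ insert r K
  neighborSet_c : G.neighborSet c ⊆ insert r K
  nested_ab : G.neighborSet a ∩ K ⊆ G.neighborSet b
  nested_bc : G.neighborSet b ∩ K ⊆ G.neighborSet c

namespace NestedLeaves

variable {V : Type*} {G : SimpleGraph V} {K : Set V} {r a b c : V}

theorem adj_b_of_adj_a (h : NestedLeaves G K r a b c) {x : V} (hax : G.Adj a x) (hxK : x ∈ K) :
    G.Adj b x :=
  h.nested_ab ⟨hax, hxK⟩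

theorem adj_c_of_adj_b (h : NestedLeaves G K r a b c) {x : V} (hbx : G.Adj b x) (hxK : x ∈ K) :
    G.Adj c x :=
  h.nested_bc ⟨hbx, hxK⟩

variable [DecidableEq V] {X : Finset V}

theorem notMem_insert_a (h : NestedLeaves G K r a b c) {x : V} (hxK : x ∈ K) (hxX : x ∉ X) :
    x ∉ insert a X := by
  simp [hxX, ne_of_mem_of_not_mem hxK h.a_notMem]

variable [Fintype V]

theorem isFVS_of_subset (h : NestedLeaves G K r a b c) {Y : Finset V}
    (hY : IsFVS G (insert c (insert b (insert a Y)))) (hKY : K ⊆ Y) (haY : a ∉ Y) (hbY : b ∉ Y)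
    (hcY : c ∉ Y) : IsFVS G Y := by
  have hN : ∀ {u : V} {Z : Finset V}, Y ⊆ Z → G.neighborSet u ⊆ insert r K →
      G.neighborSet u ⊆ insert r ↑Z := fun hYZ hu =>
    hu.trans (Set.insert_subset_insert (hKY.trans (Finset.coe_subset.2 hYZ)))
  have hYa : Y ⊆ insert a Y := Finset.subset_insert _ _
  refine ((hY.of_insert ?_ (hN (hYa.trans (Finset.subset_insert _ _)) h.neighborSet_c)).of_insert
    ?_ (hN hYa h.neighborSet_b)).of_insert haY (hN subset_rfl h.neighborSet_a)
  · simp [hcY, h.a_ne_c.symm, h.b_ne_c.symm]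
  · simp [hbY, h.a_ne_b.symm]

theorem exists_isFVS_of_mem_of_mem (h : NestedLeaves G K r a b c) (hF : IsFVS G (insert a X))
    (haX : a ∉ X) (hbX : b ∈ X) (hcX : c ∈ X) : ∃ Y : Finset V, Y.card ≤ X.card ∧ IsFVS G Y := by
  classical
  set T : Finset V := {x | x ∈ K ∧ x ∉ X}
  have hT : T.card ≤ 2 := by
    refine hF.card_le_two_of_isClique (h.isClique.subset fun x hx => (Finset.mem_filter.1 hx).2.1)
      (Finset.disjoint_left.2 fun x hx hxaX => ?_)
    simp only [T, Finset.mem_filter, Finset.mem_univ, true_and] at hx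
    rcases Finset.mem_insert.1 hxaX with rfl | hxX
    · exact h.a_notMem hx.1
    · exact hx.2 hxX
  have hX : (X \ {b, c}).card + 2 = X.card := by
    rw [← Finset.card_pair h.b_ne_c]
    exact Finset.card_sdiff_add_card_eq_card (by simp [Finset.insert_subset_iff, hbX, hcX])
  refine ⟨X \ {b, c} ∪ T, (Finset.card_union_le _ _).trans (by omega), h.isFVS_of_subset
    (hF.mono fun x => ?_) (fun x hx => ?_) (by simp [T, haX, h.a_notMem]) (by simp [T, h.b_notMem])
    (by simp [T, h.c_notMem])⟩
  · simp only [Finset.mem_insert, Finset.mem_union, Finset.mem_sdiff, Finset.mem_singleton]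
    tauto
  · have : x ≠ b ∧ x ≠ c :=
      ⟨ne_of_mem_of_not_mem hx h.b_notMem, ne_of_mem_of_not_mem hx h.c_notMem⟩
    by_cases hxX : x ∈ X <;> simp [T, hx, hxX, this]

theorem isFVS_insert_erase_b (h : NestedLeaves G K r a b c) (hF : IsFVS G (insert a X))
    (haX : a ∉ X) (hbX : b ∈ X) (hcX : c ∉ X) {w : V} (hwK : w ∈ K) (haw : G.Adj a w)
    (hwX : w ∉ X) : IsFVS G (insert r (X.erase b)) := by
  have hw : ∀ x ∈ K, G.Adj c x → x ∉ X → x = w := fun x hxK hcx hxX =>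
    hF.eq_of_adj_of_isClique h.isClique hcx (h.adj_c_of_adj_b (h.adj_b_of_adj_a haw hwK) hwK)
      hxK hwK (by simp [hcX, h.a_ne_c.symm]) (h.notMem_insert_a hxK hxX)
      (h.notMem_insert_a hwK hwX)
  exact hF.insert_erase_of_insert haX hbX h.adj_ra.ne' h.adj_rb.ne'
    (neighborSet_subset_insert_insert_erase h.neighborSet_a h.b_notMem fun x hxK hax =>
      hw x hxK (h.adj_c_of_adj_b (h.adj_b_of_adj_a hax hxK) hxK))
    (neighborSet_subset_insert_insert_erase h.neighborSet_b h.b_notMem fun x hxK hbx =>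
      hw x hxK (h.adj_c_of_adj_b hbx hxK))

theorem isFVS_insert_erase_c (h : NestedLeaves G K r a b c) (hF : IsFVS G (insert a X))
    (haX : a ∉ X) (hbX : b ∉ X) {w w' : V} (hwK : w ∈ K) (hbw : G.Adj b w) (hwX : w ∉ X)
    (hw'K : w' ∈ K) (hw'X : w' ∉ X) (hww' : w ≠ w')
    (ha : ∀ x ∈ K, G.Adj a x → x ∉ X → x = w) : IsFVS G (insert w (X.erase c)) := by
  set Y := insert w (X.erase c)
  have hwF := h.notMem_insert_a hwK hwX
  have hcY : c ∉ insert a Y := by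
    simp [Y, h.a_ne_c.symm, (ne_of_mem_of_not_mem hwK h.c_notMem).symm]
  have hZ : IsFVS G (insert c (insert a Y)) := hF.mono fun x => by
    simp only [Y, Finset.mem_insert, Finset.mem_erase]; tauto
  have hcN : ∀ x, G.Adj c x → x ∉ insert a Y → x = r ∨ x = w' := by
    intro x hcx hxY
    refine (h.neighborSet_c hcx).imp_right fun hxK => ?_
    have hxX : x ∉ X := fun hxX => hxY (by simp [Y, hxX, ne_of_mem_of_not_mem hxK h.c_notMem])
    have hxw : x ≠ w := fun hxw => hxY (by simp [Y, hxw])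
    exact hF.eq_of_adj_of_isClique h.isClique (h.isClique hwK hxK hxw.symm)
      (h.isClique hwK hw'K hww') hxK hw'K hwF (h.notMem_insert_a hxK hxX)
      (h.notMem_insert_a hw'K hw'X)
  have hrw' : ∀ p : G.Walk r w', ∃ z ∈ p.support, z ∈ insert c (insert a Y) := by
    intro p
    obtain ⟨z, hz, hzF⟩ := ((isFVS_iff_insert hwF).1 hF).2 b w' hbw.symm
      (h.isClique hwK hw'K hww') (ne_of_mem_of_not_mem hw'K h.b_notMem).symm (.cons h.adj_rb.symm p)
    rw [Walk.support_cons, List.mem_cons] at hz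
    rcases hz with rfl | hz
    · simp [h.a_ne_b.symm, hbX, (ne_of_mem_of_not_mem hwK h.b_notMem).symm] at hzF
    · refine ⟨z, hz, ?_⟩
      simp only [Y, Finset.mem_insert, Finset.mem_erase] at hzF ⊢
      tauto
  refine ((isFVS_iff_insert hcY).2 ⟨hZ, fun x y hcx hcy hxy p => ?_⟩).of_insert
    (w := r) (by simp [Y, haX, (ne_of_mem_of_not_mem hwK h.a_notMem).symm]) ?_
  · by_cases hxY : x ∈ insert a Y
    · exact ⟨x, p.start_mem_support, Finset.mem_insert_of_mem hxY⟩
    by_cases hyY : y ∈ insert a Y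
    · exact ⟨y, p.end_mem_support, Finset.mem_insert_of_mem hyY⟩
    rcases hcN x hcx hxY with rfl | rfl <;> rcases hcN y hcy hyY with rfl | rfl
    · exact absurd rfl hxy
    · exact hrw' p
    · obtain ⟨z, hz, hzZ⟩ := hrw' p.reverse
      exact ⟨z, by simpa using hz, hzZ⟩
    · exact absurd rfl hxy
  · rw [Finset.coe_insert]
    exact neighborSet_subset_insert_insert_erase h.neighborSet_a h.c_notMem ha

theorem exists_isFVS_of_notMem_of_mem (h : NestedLeaves G K r a b c)
    (hF : IsFVS G (insert a X)) (haX : a ∉ X) (hbX : b ∉ X) (hcX : c ∈ X) {w : V} (hwK : w ∈ K)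
    (haw : G.Adj a w) (hwX : w ∉ X) : ∃ Y : Finset V, Y.card ≤ X.card ∧ IsFVS G Y := by
  have hbw : ∀ x ∈ K, G.Adj b x → x ∉ X → x = w := fun x hxK hbx hxX =>
    hF.eq_of_adj_of_isClique h.isClique hbx (h.adj_b_of_adj_a haw hwK) hxK hwK
      (by simp [hbX, h.a_ne_b.symm]) (h.notMem_insert_a hxK hxX) (h.notMem_insert_a hwK hwX)
  have ha : ∀ x ∈ K, G.Adj a x → x ∉ X → x = w := fun x hxK hax =>
    hbw x hxK (h.adj_b_of_adj_a hax hxK)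
  by_cases hc : ∀ x ∈ K, G.Adj c x → x ∉ X → x = w
  · refine ⟨insert r (X.erase c), Finset.card_insert_erase_le hcX, ?_⟩
    exact hF.insert_erase_of_insert haX hcX h.adj_ra.ne' h.adj_rc.ne'
      (neighborSet_subset_insert_insert_erase h.neighborSet_a h.c_notMem ha)
      (neighborSet_subset_insert_insert_erase h.neighborSet_c h.c_notMem hc)
  · push Not at hc
    obtain ⟨w', hw'K, -, hw'X, hw'w⟩ := hc
    refine ⟨insert w (X.erase c), Finset.card_insert_erase_le hcX, ?_⟩
    exact h.isFVS_insert_erase_c hF haX hbX hwK (h.adj_b_of_adj_a haw hwK) hwX hw'K hw'X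
      hw'w.symm ha

theorem isFVS_of_notMem_of_notMem (h : NestedLeaves G K r a b c) (hF : IsFVS G (insert a X))
    (haX : a ∉ X) (hbX : b ∉ X) (hcX : c ∉ X) {w : V} (hwK : w ∈ K) (haw : G.Adj a w)
    (hwX : w ∉ X) : IsFVS G X := by
  refine hF.of_insert haX (w := w) fun x hax => ?_
  rcases h.neighborSet_a hax with rfl | hxK
  · refine .inr (Finset.mem_coe.2 (by_contra fun hxX => ?_))
    have hbF : b ∉ insert a X := by simp [hbX, h.a_ne_b.symm]
    obtain ⟨z, hz, hzF⟩ := ((isFVS_iff_insert hbF).1 hF).2 x w h.adj_rb.symm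
      (h.adj_b_of_adj_a haw hwK) (ne_of_mem_of_not_mem hwK h.r_notMem).symm
      (.cons h.adj_rc (.cons (h.adj_c_of_adj_b (h.adj_b_of_adj_a haw hwK) hwK) .nil))
    simp only [Walk.support_cons, Walk.support_nil, List.mem_cons, List.not_mem_nil, or_false]
      at hz
    rcases hz with rfl | rfl | rfl
    · simp [hxX, h.adj_rb.ne, h.adj_ra.ne] at hzF
    · simp [hcX, h.b_ne_c.symm, h.a_ne_c.symm] at hzF
    · simp [hwX, ne_of_mem_of_not_mem hwK h.b_notMem, ne_of_mem_of_not_mem hwK h.a_notMem] at hzF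
  · by_cases hxX : x ∈ X
    · exact .inr hxX
    · exact .inl (hF.eq_of_adj_of_isClique h.isClique
        (h.adj_c_of_adj_b (h.adj_b_of_adj_a hax hxK) hxK)
        (h.adj_c_of_adj_b (h.adj_b_of_adj_a haw hwK) hwK) hxK hwK
        (by simp [hcX, h.a_ne_c.symm]) (h.notMem_insert_a hxK hxX) (h.notMem_insert_a hwK hwX))

theorem exists_isFVS (h : NestedLeaves G K r a b c) (hF : IsFVS G (insert a X)) (haX : a ∉ X) :
    ∃ Y : Finset V, Y.card ≤ X.card ∧ IsFVS G Y := by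
  by_cases hbc : b ∈ X ∧ c ∈ X
  · exact h.exists_isFVS_of_mem_of_mem hF haX hbc.1 hbc.2
  by_cases hw : ∃ w ∈ K, G.Adj a w ∧ w ∉ X
  · obtain ⟨w, hwK, haw, hwX⟩ := hw
    by_cases hbX : b ∈ X
    · exact ⟨_, Finset.card_insert_erase_le hbX,
        h.isFVS_insert_erase_b hF haX hbX (fun hcX => hbc ⟨hbX, hcX⟩) hwK haw hwX⟩
    by_cases hcX : c ∈ X
    · exact h.exists_isFVS_of_notMem_of_mem hF haX hbX hcX hwK haw hwX
    · exact ⟨X, le_rfl, h.isFVS_of_notMem_of_notMem hF haX hbX hcX hwK haw hwX⟩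
  · push Not at hw
    refine ⟨X, le_rfl, hF.of_insert haX (w := r) fun x hax => ?_⟩
    rcases h.neighborSet_a hax with rfl | hxK
    · exact .inl rfl
    · exact .inr (hw x hxK hax)

theorem hasFVS_of_hasFVS_delVert (h : NestedLeaves G K r a b c) {k : ℕ}
    (hk : HasFVS (delVert G a) k) : HasFVS G k := by
  obtain ⟨X, hXk, hX⟩ := hk
  obtain ⟨Y, hYX, hY⟩ := h.exists_isFVS (isFVS_delVert_iff.1 hX) (by simp)
  exact ⟨Y, hYX.trans ((Finset.card_map _).trans_le hXk), hY⟩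

end NestedLeaves

theorem fvs_rule_R6_general {V : Type*} [Fintype V] [DecidableEq V]
    (G : SimpleGraph V) (k q : ℕ)
    (v : Fin q → V)
    (hK : G.IsClique (Set.range v))
    (r a b c : V) (hr : r ∉ Set.range v)
    (habc : a ≠ b ∧ a ≠ c ∧ b ≠ c)
    (haK : a ∉ Set.range v) (hbK : b ∉ Set.range v) (hcK : c ∉ Set.range v)
    (hra : G.Adj r a) (hrb : G.Adj r b) (hrc : G.Adj r c)
    (hNa : G.neighborSet a ⊆ insert r (Set.range v))
    (hNb : G.neighborSet b ⊆ insert r (Set.range v))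
    (hNc : G.neighborSet c ⊆ insert r (Set.range v))
    (qa qb qc : ℕ) (hab : qa ≤ qb) (hbc : qb ≤ qc)
    (hpa : ∀ i : Fin q, G.Adj a (v i) ↔ (i : ℕ) < qa)
    (hpb : ∀ i : Fin q, G.Adj b (v i) ↔ (i : ℕ) < qb)
    (hpc : ∀ i : Fin q, G.Adj c (v i) ↔ (i : ℕ) < qc) :
    HasFVS G k ↔ HasFVS (delVert G a) k := by
  have h : NestedLeaves G (Set.range v) r a b c :=
    { isClique := hK, r_notMem := hr, a_notMem := haK, b_notMem := hbK, c_notMem := hcK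
      a_ne_b := habc.1, a_ne_c := habc.2.1, b_ne_c := habc.2.2
      adj_ra := hra, adj_rb := hrb, adj_rc := hrc
      neighborSet_a := hNa, neighborSet_b := hNb, neighborSet_c := hNc
      nested_ab := by
        rintro _ ⟨hax, i, rfl⟩
        exact (hpb i).2 (((hpa i).1 hax).trans_le hab)
      nested_bc := by
        rintro _ ⟨hbx, i, rfl⟩
        exact (hpc i).2 (((hpb i).1 hbx).trans_le hbc) }
  exact ⟨HasFVS.delVert, h.hasFVS_of_hasFVS_delVert⟩

/-- Safeness of rule (R6): given a clique `K = {v 0, …, v (q-1)}`, a vertex `r`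
outside `K`, and three pairwise non-adjacent leaves `a`, `b`, `c` attached at `r`
with nested prefix neighborhoods in `K`, the vertex `a` may be deleted. -/
theorem fvs_rule_R6 {V : Type*} [Fintype V] [DecidableEq V]
    (G : SimpleGraph V) (k q : ℕ)
    (v : Fin q → V) (hvinj : Function.Injective v)
    (hK : G.IsClique (Set.range v))
    (r a b c : V) (hr : r ∉ Set.range v)
    (habc : a ≠ b ∧ a ≠ c ∧ b ≠ c)
    (haK : a ∉ Set.range v) (hbK : b ∉ Set.range v) (hcK : c ∉ Set.range v)
    (har : a ≠ r) (hbr : b ≠ r) (hcr : c ≠ r)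
    (hnadj : ¬ G.Adj a b ∧ ¬ G.Adj a c ∧ ¬ G.Adj b c)
    (hra : G.Adj r a) (hrb : G.Adj r b) (hrc : G.Adj r c)
    (hNa : G.neighborSet a ⊆ insert r (Set.range v))
    (hNb : G.neighborSet b ⊆ insert r (Set.range v))
    (hNc : G.neighborSet c ⊆ insert r (Set.range v))
    (qa qb qc : ℕ) (h1 : 1 ≤ qa) (hab : qa ≤ qb) (hbc : qb ≤ qc) (hcq : qc ≤ q)
    (hpa : ∀ i : Fin q, G.Adj a (v i) ↔ (i : ℕ) < qa)
    (hpb : ∀ i : Fin q, G.Adj b (v i) ↔ (i : ℕ) < qb)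
    (hpc : ∀ i : Fin q, G.Adj c (v i) ↔ (i : ℕ) < qc) :
    HasFVS G k ↔ HasFVS (delVert G a) k :=
  fvs_rule_R6_general G k q v hK r a b c hr habc haK hbK hcK hra hrb hrc hNa hNb hNc qa qb qc hab
    hbc hpa hpb hpc
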